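/- arXiv:1109.5847 — 5 statements merged into one kernel-verified Lean document; each statement's English description precedes it below -/
import Mathlib

section
/- For every non-negative integer d, the number of 2×2 matrices with non-negative integer entries whose entries sum to 2d+1, counted up to permutations of the rows and of the columns, equals (d+1)(d+2)(2d+3)/6, i.e., equals the sum of squares 0² + 1² + ⋯ + (d+1)². -/
/-!
For an odd total no matrix is fixed by a nontrivial pair `(σ, τ)`: a row swap, a column swap
or both pair the four entries off into two equal halves, making the total even. So
`Sym(2) × Sym(2)` acts freely, every orbit has four elements, and the orbit count is a quarter
of the stars-and-bars count `C(2d + 4, 3)` of all matrices, i.e. `(d + 1)(d + 2)(2d + 3) / 6`.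
-/

/-- The number of `2 × 2` matrices with non-negative integer entries whose entries
sum to `d`, counted up to permutations of the rows and of the columns (i.e. the
number of orbits under the action of `Sym(2) × Sym(2)`). -/
noncomputable def matCount (d : ℕ) : ℕ :=
  Nat.card (Quot fun A B : {A : Matrix (Fin 2) (Fin 2) ℕ // ∑ i, ∑ j, A i j = d} =>
    ∃ σ τ : Equiv.Perm (Fin 2),
      ∀ i j, (B : Matrix (Fin 2) (Fin 2) ℕ) i j = (A : Matrix (Fin 2) (Fin 2) ℕ) (σ i) (τ j))

open Equiv MulAction

theorem MulAction.natCard_eq_card_orbits_mul_card_group {G X : Type*} [Group G] [MulAction G X]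
    (h : ∀ x : X, stabilizer G x = ⊥) :
    Nat.card X = Nat.card (orbitRel.Quotient G X) * Nat.card G := by
  rw [Nat.card_congr (selfEquivOrbitsQuotientProd h), Nat.card_prod]

namespace Matrix

variable {m n R : Type*}

/-- `(σ, τ)` moves row `i` to row `σ i` and column `j` to column `τ j`. -/
instance : MulAction (Perm m × Perm n) (Matrix m n R) where
  smul g A := A.submatrix ⇑g.1⁻¹ ⇑g.2⁻¹
  one_smul _ := rfl
  mul_smul _ _ _ := rfl

theorem perm_prod_smul_apply (g : Perm m × Perm n) (A : Matrix m n R) (i : m) (j : n) :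
    (g • A) i j = A (g.1⁻¹ i) (g.2⁻¹ j) := rfl

variable [Fintype m] [Fintype n] [AddCommMonoid R]

theorem sum_sum_perm_prod_smul (g : Perm m × Perm n) (A : Matrix m n R) :
    ∑ i, ∑ j, (g • A) i j = ∑ i, ∑ j, A i j := by
  simp only [perm_prod_smul_apply]
  rw [Equiv.sum_comp g.1⁻¹ fun i => ∑ j, A i (g.2⁻¹ j)]
  exact Fintype.sum_congr _ _ fun i => Equiv.sum_comp g.2⁻¹ (A i)

instance (s : R) : MulAction (Perm m × Perm n) {A : Matrix m n R // ∑ i, ∑ j, A i j = s} where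
  smul g A := ⟨g • A.1, (sum_sum_perm_prod_smul g A.1).trans A.2⟩
  one_smul _ := rfl
  mul_smul _ _ _ := rfl

theorem mem_perm_prod_orbit_iff {s : R} {A B : {A : Matrix m n R // ∑ i, ∑ j, A i j = s}} :
    B ∈ orbit (Perm m × Perm n) A ↔
      ∃ (σ : Perm m) (τ : Perm n), ∀ i j, B.1 i j = A.1 (σ i) (τ j) := by
  constructor
  · rintro ⟨g, rfl⟩
    exact ⟨g.1⁻¹, g.2⁻¹, fun i j => rfl⟩
  · rintro ⟨σ, τ, h⟩
    exact ⟨(σ⁻¹, τ⁻¹), Subtype.ext <| ext fun i j => (h i j).symm⟩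

theorem natCard_entrySum_eq_multichoose (s : ℕ) :
    Nat.card {A : Matrix m n ℕ // ∑ i, ∑ j, A i j = s} =
      (Fintype.card m * Fintype.card n).multichoose s := by
  classical
  have e : Sym (m × n) s ≃ {A : Matrix m n ℕ // ∑ i, ∑ j, A i j = s} :=
    (Sym.equivNatSumOfFintype (m × n) s).trans <|
      (Equiv.curry m n ℕ).subtypeEquiv fun f => by rw [Fintype.sum_prod_type]; rfl
  rw [← Nat.card_congr e, Sym.natCard_sym_eq_multichoose, Nat.card_eq_fintype_card,
    Fintype.card_prod]

theorem even_sum_sum_of_perm_prod_smul_eq {g : Perm (Fin 2) × Perm (Fin 2)} (hg : g ≠ 1)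
    {A : Matrix (Fin 2) (Fin 2) R} (hA : g • A = A) : Even (∑ i, ∑ j, A i j) := by
  have perm_fin_two : ∀ σ : Perm (Fin 2), σ = 1 ∨ σ = Equiv.swap 0 1 := by decide
  have h := fun i j => congrFun₂ hA i j
  simp only [perm_prod_smul_apply, Fin.forall_fin_two] at h
  simp only [Fin.sum_univ_two]
  obtain ⟨σ, τ⟩ := g
  rcases perm_fin_two σ with rfl | rfl <;> rcases perm_fin_two τ with rfl | rfl <;>
    simp at h hg
  · exact ⟨A 0 0 + A 1 0, by rw [h.1.1, h.2.1]; abel⟩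
  · exact ⟨A 0 0 + A 0 1, by rw [h.1.1, h.1.2]⟩
  · exact ⟨A 0 0 + A 0 1, by rw [h.1.1, h.1.2]; abel⟩

theorem stabilizer_perm_prod_eq_bot_of_odd {s : ℕ} (hs : Odd s)
    (A : {A : Matrix (Fin 2) (Fin 2) ℕ // ∑ i, ∑ j, A i j = s}) :
    stabilizer (Perm (Fin 2) × Perm (Fin 2)) A = ⊥ := by
  refine (Subgroup.eq_bot_iff_forall _).2 fun g hg => ?_
  by_contra hne
  have hA : g • A.1 = A.1 := congrArg Subtype.val hg
  exact Nat.not_even_iff_odd.2 hs (A.2 ▸ even_sum_sum_of_perm_prod_smul_eq hne hA)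

end Matrix

open Matrix

theorem matCount_eq_card_orbits (s : ℕ) :
    matCount s = Nat.card (orbitRel.Quotient (Perm (Fin 2) × Perm (Fin 2))
      {A : Matrix (Fin 2) (Fin 2) ℕ // ∑ i, ∑ j, A i j = s}) :=
  Nat.card_congr <| Quot.congrRight fun A B => by
    rw [orbitRel_apply, mem_orbit_symm, mem_perm_prod_orbit_iff]

theorem four_mul_matCount_of_odd {s : ℕ} (hs : Odd s) : 4 * matCount s = (s + 3).choose 3 := by
  have hfree := natCard_eq_card_orbits_mul_card_group (stabilizer_perm_prod_eq_bot_of_odd hs)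
  rw [natCard_entrySum_eq_multichoose, Nat.card_prod, Nat.card_perm] at hfree
  simp only [Fintype.card_fin, Nat.card_eq_fintype_card (α := Fin 2), Nat.factorial_two,
    Nat.multichoose_eq, show 2 * 2 + s - 1 = s + 3 by omega] at hfree
  rw [matCount_eq_card_orbits, ← Nat.choose_symm_add, hfree, mul_comm]

theorem sum_range_sq_mul_six (n : ℕ) :
    (∑ i ∈ Finset.range (n + 1), i ^ 2) * 6 = n * (n + 1) * (2 * n + 1) := by
  induction n with
  | zero => rfl
  | succ n ih => rw [Finset.sum_range_succ, add_mul, ih]; ring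

theorem choose_three_mul_six (n : ℕ) : (n + 3).choose 3 * 6 = (n + 3) * (n + 2) * (n + 1) := by
  rw [mul_comm, show 6 = (3).factorial from rfl, ← Nat.descFactorial_eq_factorial_mul_choose]
  simp only [Nat.succ_descFactorial_succ, Nat.descFactorial_zero, mul_one, mul_assoc]

/-- The number of non-negative integer `2 × 2` matrices whose entries sum to
`2d + 1`, counted up to row and column permutations, equals
`(d+1)(d+2)(2d+3)/6 = 0² + 1² + ⋯ + (d+1)²`. -/
theorem matCount_odd (d : ℕ) :
    matCount (2 * d + 1) = (d + 1) * (d + 2) * (2 * d + 3) / 6 ∧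
    matCount (2 * d + 1) = ∑ i ∈ Finset.range (d + 2), i ^ 2 := by
  have hcount := four_mul_matCount_of_odd (odd_two_mul_add_one d)
  have hchoose := choose_three_mul_six (2 * d + 1)
  have hsq : (∑ i ∈ Finset.range (d + 2), i ^ 2) * 6 = (d + 1) * (d + 2) * (2 * d + 3) :=
    (sum_range_sq_mul_six (d + 1)).trans (by ring)
  have hprod : (2 * d + 1 + 3) * (2 * d + 1 + 2) * (2 * d + 1 + 1) =
      4 * ((d + 1) * (d + 2) * (2 * d + 3)) := by ring
  omega
end

section
/- For every non-negative integer d, the number of 2×2 matrices with non-negative integer entries whose entries sum to 2d, counted up to permutations of the rows and of the columns, equals ((d+1)³ + 2(d+1))/3. -/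
open Equiv MulAction Finset

theorem MulAction.card_orbits_mul_card_eq_sum_card_fixedBy (G X : Type*) [Group G]
    [MulAction G X] [Fintype G] [Finite X] :
    Nat.card (orbitRel.Quotient G X) * Nat.card G = ∑ g : G, Nat.card (fixedBy X g) := by
  classical
  have := Fintype.ofFinite X
  simp only [Nat.card_eq_fintype_card]
  convert (sum_card_fixedBy_eq_card_orbits_mul_card_group G X).symm

theorem Equiv.Perm.univ_fin_two : (univ : Finset (Perm (Fin 2))) = {1, swap 0 1} := by decide

theorem Nat.six_mul_choose_add_three (n : ℕ) :
    6 * (n + 3).choose n = (n + 1) * (n + 2) * (n + 3) := by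
  rw [Nat.choose_symm_add, ← show Nat.factorial 3 = 6 from rfl,
    ← Nat.descFactorial_eq_factorial_mul_choose]
  simp only [Nat.descFactorial_succ, Nat.reduceSubDiff, Nat.add_one_sub_one, tsub_zero,
    Nat.descFactorial_zero, mul_one]
  ring

namespace Matrix

variable {m n α : Type*}

instance : MulAction (Perm m × Perm n) (Matrix m n α) where
  smul g A := A.submatrix ⇑g.1⁻¹ ⇑g.2⁻¹
  one_smul _ := rfl
  mul_smul _ _ _ := rfl

theorem perm_smul_apply (g : Perm m × Perm n) (A : Matrix m n α) (i : m) (j : n) :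
    (g • A) i j = A (g.1⁻¹ i) (g.2⁻¹ j) := rfl

variable [Fintype m] [Fintype n]

theorem sum_perm_smul [AddCommMonoid α] (g : Perm m × Perm n) (A : Matrix m n α) :
    ∑ i, ∑ j, (g • A) i j = ∑ i, ∑ j, A i j := by
  simp only [perm_smul_apply]
  rw [Equiv.sum_comp g.1⁻¹ fun i => ∑ j, A i (g.2⁻¹ j)]
  exact sum_congr rfl fun i _ => Equiv.sum_comp g.2⁻¹ (A i)

variable (m n) in
def entrySumFiber [AddCommMonoid α] (k : α) : SubMulAction (Perm m × Perm n) (Matrix m n α) where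
  carrier := {A | ∑ i, ∑ j, A i j = k}
  smul_mem' g A h := (sum_perm_smul g A).trans h

@[simp]
theorem mem_entrySumFiber [AddCommMonoid α] {k : α} {A : Matrix m n α} :
    A ∈ entrySumFiber m n k ↔ ∑ i, ∑ j, A i j = k := Iff.rfl

variable (m n) in
open scoped Classical in
noncomputable def entrySumFiberEquivSym (k : ℕ) : entrySumFiber m n k ≃ Sym (m × n) k :=
  ((Equiv.curry m n ℕ).symm.subtypeEquiv fun _ =>
    mem_entrySumFiber.trans (by simp [Fintype.sum_prod_type])).trans
    (Sym.equivNatSumOfFintype (m × n) k).symm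

instance (k : ℕ) : Finite (entrySumFiber m n k) :=
  Finite.of_equiv _ (entrySumFiberEquivSym m n k).symm

theorem card_entrySumFiber (k : ℕ) :
    Nat.card (entrySumFiber m n k) = (Fintype.card m * Fintype.card n + k - 1).choose k := by
  classical
  rw [Nat.card_congr (entrySumFiberEquivSym m n k), Nat.card_eq_fintype_card,
    Sym.card_sym_eq_choose, Fintype.card_prod]

theorem card_fixedBy_entrySumFiber_of_range {g : Perm m × Perm n} (f : ℕ × ℕ → Matrix m n ℕ)
    (hf : Function.Injective f) (hfix : ∀ A, g • A = A ↔ A ∈ Set.range f) {c : ℕ} (hc : 0 < c)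
    (hsum : ∀ p, ∑ i, ∑ j, f p i j = c * (p.1 + p.2)) (d : ℕ) :
    Nat.card (fixedBy (entrySumFiber m n (c * d)) g) = d + 1 := by
  let φ : antidiagonal d → fixedBy (entrySumFiber m n (c * d)) g := fun p =>
    ⟨⟨f p, by rw [mem_entrySumFiber, hsum, mem_antidiagonal.1 p.2]⟩,
      Subtype.ext ((hfix _).2 ⟨p, rfl⟩)⟩
  have hφ : Function.Bijective φ := by
    refine ⟨fun p q h => Subtype.ext (hf (congrArg (fun A => A.1.1) h)), fun A => ?_⟩
    obtain ⟨p, hp⟩ := (hfix A.1.1).1 (congrArg Subtype.val A.2)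
    have hA := mem_entrySumFiber.1 A.1.2
    rw [← hp, hsum] at hA
    exact ⟨⟨p, mem_antidiagonal.2 (Nat.eq_of_mul_eq_mul_left hc hA)⟩, Subtype.ext (Subtype.ext hp)⟩
  rw [← Nat.card_congr (Equiv.ofBijective φ hφ), Nat.card_eq_fintype_card, Fintype.card_coe,
    Nat.card_antidiagonal]

end Matrix

open Matrix

theorem matCount_eq_card_orbits_s2 (k : ℕ) :
    matCount k = Nat.card (orbitRel.Quotient (Perm (Fin 2) × Perm (Fin 2))
      (entrySumFiber (Fin 2) (Fin 2) k)) := by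
  refine Nat.card_congr <| Quot.congr
    (Equiv.subtypeEquivRight fun _ => mem_entrySumFiber.symm) fun A B => ?_
  rw [orbitRel_apply, mem_orbit_iff]
  constructor
  · rintro ⟨σ, τ, h⟩
    exact ⟨(σ, τ), Subtype.ext <| Matrix.ext fun i j => by simp [perm_smul_apply, h]⟩
  · rintro ⟨g, hg⟩
    refine ⟨g.1, g.2, fun i j => ?_⟩
    have := congrArg (fun A : entrySumFiber (Fin 2) (Fin 2) k => A.1 (g.1 i) (g.2 j)) hg
    simpa [perm_smul_apply] using this

theorem card_fixedBy_swap_one (d : ℕ) :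
    Nat.card (fixedBy (entrySumFiber (Fin 2) (Fin 2) (2 * d))
      ((swap 0 1, 1) : Perm (Fin 2) × Perm (Fin 2))) = d + 1 :=
  card_fixedBy_entrySumFiber_of_range (fun p => !![p.1, p.2; p.1, p.2])
    (fun p q h => by simpa [Prod.ext_iff] using h)
    (fun A => by
      rw [A.eta_fin_two]
      simp [← Matrix.ext_iff, Fin.forall_fin_two, perm_smul_apply]
      omega)
    two_pos (fun p => by simp [Fin.sum_univ_two]; ring) d

theorem card_fixedBy_one_swap (d : ℕ) :
    Nat.card (fixedBy (entrySumFiber (Fin 2) (Fin 2) (2 * d))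
      ((1, swap 0 1) : Perm (Fin 2) × Perm (Fin 2))) = d + 1 :=
  card_fixedBy_entrySumFiber_of_range (fun p => !![p.1, p.1; p.2, p.2])
    (fun p q h => by simpa [Prod.ext_iff] using h)
    (fun A => by
      rw [A.eta_fin_two]
      simp [← Matrix.ext_iff, Fin.forall_fin_two, perm_smul_apply]
      omega)
    two_pos (fun p => by simp [Fin.sum_univ_two]; ring) d

theorem card_fixedBy_swap_swap (d : ℕ) :
    Nat.card (fixedBy (entrySumFiber (Fin 2) (Fin 2) (2 * d))
      ((swap 0 1, swap 0 1) : Perm (Fin 2) × Perm (Fin 2))) = d + 1 :=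
  card_fixedBy_entrySumFiber_of_range (fun p => !![p.1, p.2; p.2, p.1])
    (fun p q h => by
      simp only [EmbeddingLike.apply_eq_iff_eq, vecCons_inj, and_true] at h
      exact Prod.ext h.1.1 h.1.2)
    (fun A => by
      rw [A.eta_fin_two]
      simp [← Matrix.ext_iff, Fin.forall_fin_two, perm_smul_apply]
      omega)
    two_pos (fun p => by simp [Fin.sum_univ_two]; ring) d

/-- The number of non-negative integer `2 × 2` matrices whose entries sum to `2d`,
counted up to row and column permutations, equals `((d+1)³ + 2(d+1))/3`. -/
theorem matCount_even (d : ℕ) :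
    matCount (2 * d) = ((d + 1) ^ 3 + 2 * (d + 1)) / 3 := by
  have hburnside := card_orbits_mul_card_eq_sum_card_fixedBy (Perm (Fin 2) × Perm (Fin 2))
    (entrySumFiber (Fin 2) (Fin 2) (2 * d))
  have hpair : (1 : Perm (Fin 2)) ≠ swap 0 1 := by decide
  simp only [Fintype.sum_prod_type, Perm.univ_fin_two, sum_pair hpair, Prod.mk_one_one,
    fixedBy_one_eq_univ, Nat.card_univ, card_entrySumFiber, card_fixedBy_swap_one,
    card_fixedBy_one_swap, card_fixedBy_swap_swap, Nat.card_prod, Nat.card_perm, Nat.card_fin,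
    Nat.factorial_two, Fintype.card_fin] at hburnside
  rw [show 2 * 2 + 2 * d - 1 = 2 * d + 3 by omega] at hburnside
  have hcube := Nat.six_mul_choose_add_three (2 * d)
  rw [matCount_eq_card_orbits_s2]
  refine (Nat.div_eq_of_eq_mul_left three_pos ?_).symm
  linarith
end

section
/- Fix positive integers n and d. For a finite set W of monomials of degree d in n variables, one has |R₁W| = n·|W| if and only if W is an independent set in the graph S_n(d), i.e., if and only if no two distinct elements a, b of W satisfy ∑_i max(a_i, b_i) = d + 1. -/
/-- Monomials of degree `d` in `n` variables, identified with exponent vectors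
`a : Fin n → ℕ` with `∑ i, a i = d`. -/
def Mset (n d : ℕ) : Finset (Fin n → ℕ) := Finset.Nat.antidiagonalTuple n d

/-- `R₁W = { a + e_i : a ∈ W, 1 ≤ i ≤ n }`, where `e_i` is the `i`-th standard
unit vector. -/
def R1 (n : ℕ) (W : Finset (Fin n → ℕ)) : Finset (Fin n → ℕ) :=
  (W ×ˢ (Finset.univ : Finset (Fin n))).image fun p => p.1 + Pi.single p.2 1

lemma sum_eq_one_single {n : ℕ} (g : Fin n → ℕ) (h : ∑ i, g i = 1) :
    ∃ j, g = Pi.single j 1 := by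
  obtain ⟨j, hj⟩ : ∃ j, g j ≠ 0 := by
    by_contra hc; push_neg at hc; simp [hc] at h
  refine ⟨j, funext fun k => ?_⟩
  rcases eq_or_ne k j with rfl | hk
  · have h1 : g k ≤ 1 := h ▸ Finset.single_le_sum (fun i _ => Nat.zero_le _) (Finset.mem_univ k)
    simp only [Pi.single_eq_same]; omega
  · have h2 : g j + g k ≤ 1 := by
      have := Finset.sum_le_sum_of_subset (Finset.subset_univ ({j, k} : Finset (Fin n)))
        (f := g)
      rwa [Finset.sum_pair (Ne.symm hk), h] at this
    simp only [Pi.single_eq_of_ne hk]; omega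

/-- For positive `n`, `d` and `W ⊆ M_d`, one has `|R₁W| = n·|W|` iff `W` is an
independent set in `S_n(d)`, i.e. no two distinct `a, b ∈ W` satisfy
`∑ i, max (a i) (b i) = d + 1`. -/
theorem R1_card_eq_iff_indep (n d : ℕ) (hn : 0 < n) (hd : 0 < d)
    (W : Finset (Fin n → ℕ)) (hW : W ⊆ Mset n d) :
    (R1 n W).card = n * W.card ↔
      ∀ a ∈ W, ∀ b ∈ W, a ≠ b → ∑ i, max (a i) (b i) ≠ d + 1 := by
  have hcard : (W ×ˢ (Finset.univ : Finset (Fin n))).card = n * W.card := by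
    simp [Finset.card_product, mul_comm]
  rw [R1, ← hcard, Finset.card_image_iff]
  constructor
  · intro hinj a ha b hb hab hsum
    have hda : ∑ i, a i = d := (Finset.Nat.mem_antidiagonalTuple).mp (hW ha)
    have hdb : ∑ i, b i = d := (Finset.Nat.mem_antidiagonalTuple).mp (hW hb)
    set c : Fin n → ℕ := fun k => max (a k) (b k) with hc
    have hcsum : ∑ k, c k = d + 1 := hsum
    have key : ∀ x : Fin n → ℕ, (∑ i, x i = d) → (∀ k, x k ≤ c k) →
        ∃ j, x + Pi.single j 1 = c := by
      intro x hx hle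
      obtain ⟨j, hj⟩ : ∃ j, (fun k => c k - x k) = Pi.single j 1 := by
        apply sum_eq_one_single
        have hsplit : ∑ k, c k = ∑ k, x k + ∑ k, (c k - x k) := by
          rw [← Finset.sum_add_distrib]
          exact Finset.sum_congr rfl fun k _ => by have := hle k; omega
        omega
      refine ⟨j, funext fun k => ?_⟩
      have h1 := congrFun hj k
      have h2 := hle k
      simp only [Pi.add_apply, ← h1]
      omega
    obtain ⟨j, hj⟩ := key a hda fun k => le_max_left _ _
    obtain ⟨i, hi⟩ := key b hdb fun k => le_max_right _ _
    have heq : (fun p : (Fin n → ℕ) × Fin n => p.1 + Pi.single p.2 1) (a, j)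
        = (fun p : (Fin n → ℕ) × Fin n => p.1 + Pi.single p.2 1) (b, i) := by
      simp only [hj, hi]
    have := hinj (by simp [Finset.mem_coe, Finset.mem_product, ha]) 
      (by simp [Finset.mem_coe, Finset.mem_product, hb]) heq
    exact hab (congrArg Prod.fst this)
  · intro hindep p hp q hq hfeq
    obtain ⟨a, i⟩ := p
    obtain ⟨b, j⟩ := q
    simp only [Finset.coe_product, Set.mem_prod, Finset.mem_coe] at hp hq
    have ha := hp.1
    have hb := hq.1
    simp only at hfeq
    rcases eq_or_ne a b with rfl | hab
    · have hij : i = j := by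
        by_contra hne
        have h1 := congrFun hfeq i
        rw [Pi.add_apply, Pi.add_apply, Pi.single_eq_same, Pi.single_eq_of_ne hne] at h1
        omega
      rw [hij]
    · exfalso
      have hij : i ≠ j := by
        rintro rfl
        exact hab (add_right_cancel hfeq)
      have hda : ∑ k, a k = d := (Finset.Nat.mem_antidiagonalTuple).mp (hW ha)
      apply hindep a ha b hb hab
      have hpt : ∀ k, max (a k) (b k) = a k + (Pi.single i 1 : Fin n → ℕ) k := by
        intro k
        have h1 := congrFun hfeq k
        simp only [Pi.add_apply] at h1
        rcases eq_or_ne k i with rfl | hki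
        · rw [Pi.single_eq_same] at h1 ⊢
          rw [Pi.single_eq_of_ne hij] at h1
          omega
        · rw [Pi.single_eq_of_ne hki] at h1 ⊢
          rcases eq_or_ne k j with rfl | hkj
          · rw [Pi.single_eq_same] at h1; omega
          · rw [Pi.single_eq_of_ne hkj] at h1; omega
      rw [Finset.sum_congr rfl fun k _ => hpt k, Finset.sum_add_distrib, hda]
      simp
end

section
/- For all positive integers n and d, the spreading number α_n(d) equals the independence number of the graph S_n(d), i.e., the maximum cardinality of an independent set of vertices of S_n(d). -/
/-- The spreading number `α_n(d) = max{ |W| : W ⊆ M_d and |R₁W| = n·|W| }`. -/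
noncomputable def spread (n d : ℕ) : ℕ :=
  sSup {k | ∃ W : Finset (Fin n → ℕ),
    W ⊆ Mset n d ∧ (R1 n W).card = n * W.card ∧ W.card = k}
/-- The graph `S_n(d)`: vertices are the monomials of degree `d` in `n` variables,
and distinct vertices `a`, `b` are adjacent iff `deg(lcm(a,b)) = d + 1`, i.e.
`∑ i, max (a i) (b i) = d + 1`. -/
def Sgraph (n d : ℕ) : SimpleGraph {a : Fin n → ℕ // ∑ i, a i = d} where
  Adj a b := a ≠ b ∧ ∑ i, max (a.1 i) (b.1 i) = d + 1
  symm := by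
    constructor
    intro a b h
    exact ⟨h.1.symm, by rw [← h.2]; exact Finset.sum_congr rfl fun i _ => Nat.max_comm _ _⟩
  loopless := by constructor; intro a h; exact h.1 rfl
/-- The independence number of a graph: the maximum cardinality of a set of
pairwise non-adjacent vertices. -/
noncomputable def indepNum {V : Type*} (G : SimpleGraph V) : ℕ :=
  sSup {k | ∃ s : Finset V, (∀ a ∈ s, ∀ b ∈ s, a ≠ b → ¬ G.Adj a b) ∧ s.card = k}

/-!
Two distinct monomials `a`, `b` of degree `d` have a common multiple `a + e_i = b + e_j` of
degree `d + 1` exactly when their lcm `a ⊔ b` has degree `d + 1`: then `a ⊔ b - a` and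
`a ⊔ b - b` have degree one, so they are unit vectors. Hence `|R₁W| = n·|W|`, i.e. the map
`(a, i) ↦ a + e_i` is injective on `W × [n]`, exactly when `W` is independent in `S_n(d)`.
-/

section

variable {ι : Type*} [Fintype ι] [DecidableEq ι]

theorem exists_eq_piSingle_of_sum_eq_one {c : ι → ℕ} (h : ∑ i, c i = 1) :
    ∃ i, c = Pi.single i 1 := by
  obtain ⟨i, hi⟩ := (Finsupp.sum_eq_one_iff (Finsupp.equivFunOnFinite.symm c)).1
    (by simpa [Finsupp.sum_fintype] using h)
  exact ⟨i, by simpa [Finsupp.single_eq_pi_single] using congrArg (⇑) hi⟩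

theorem exists_add_single_eq_add_single_iff {a b : ι → ℕ} (hab : a ≠ b)
    (hsum : ∑ i, a i = ∑ i, b i) :
    (∃ i j, a + Pi.single i 1 = b + Pi.single j 1) ↔ ∑ i, max (a i) (b i) = ∑ i, a i + 1 := by
  change _ ↔ ∑ i, (a ⊔ b) i = _
  constructor
  · rintro ⟨i, j, h⟩
    have hle : a ⊔ b ≤ a + Pi.single i 1 := sup_le le_self_add (h ▸ le_self_add)
    have hlt : a < a ⊔ b := by
      refine lt_of_le_of_ne le_sup_left fun hsup => ?_
      have hba : b < a := lt_of_le_of_ne (sup_eq_left.1 hsup.symm) hab.symm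
      exact (Fintype.sum_strictMono hba).ne hsum.symm
    have hlt_sum : ∑ i, a i < ∑ i, (a ⊔ b) i := Fintype.sum_strictMono hlt
    have hle_sum : ∑ i, (a ⊔ b) i ≤ ∑ k, (a + Pi.single i 1 : ι → ℕ) k := Fintype.sum_mono hle
    simp only [Pi.add_apply, Finset.sum_add_distrib, Finset.sum_pi_single', Finset.mem_univ,
      if_true] at hle_sum
    omega
  · intro h
    have hsub : ∀ x ≤ a ⊔ b, ∑ i, x i = ∑ i, a i → ∃ i, x + Pi.single i 1 = a ⊔ b := by
      intro x hx hx_sum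
      obtain ⟨i, hi⟩ := exists_eq_piSingle_of_sum_eq_one (c := a ⊔ b - x) (by
        rw [Pi.sub_def, Finset.sum_tsub_distrib _ fun i _ => hx i]
        omega)
      exact ⟨i, hi ▸ add_tsub_cancel_of_le hx⟩
    obtain ⟨i, hi⟩ := hsub a le_sup_left rfl
    obtain ⟨j, hj⟩ := hsub b le_sup_right hsum.symm
    exact ⟨i, j, hi.trans hj.symm⟩

end

theorem card_R1_eq_iff {n : ℕ} (W : Finset (Fin n → ℕ)) :
    (R1 n W).card = n * W.card ↔
      ∀ a ∈ W, ∀ b ∈ W, ∀ i j, a + Pi.single i 1 = b + Pi.single j 1 → a = b := by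
  have hcard : (W ×ˢ (Finset.univ : Finset (Fin n))).card = n * W.card := by
    simp [mul_comm]
  rw [R1, ← hcard, Finset.card_image_iff]
  constructor
  · intro hinj a ha b hb i j h
    exact congrArg Prod.fst
      (hinj (x₁ := (a, i)) (x₂ := (b, j)) (by simpa using ha) (by simpa using hb) h)
  · rintro h ⟨a, i⟩ ha ⟨b, j⟩ hb hab
    simp only [Finset.coe_product, Set.mem_prod, Finset.mem_coe] at ha hb
    obtain rfl := h a ha.1 b hb.1 i j hab
    have hij : (Pi.single i 1 : Fin n → ℕ) = Pi.single j 1 := add_left_cancel hab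
    simpa [Pi.single_apply] using congrFun hij i

theorem card_R1_map_subtype_eq_iff {n d : ℕ} (s : Finset {a : Fin n → ℕ // ∑ i, a i = d}) :
    (R1 n (s.map (Function.Embedding.subtype _))).card = n * s.card ↔
      ∀ a ∈ s, ∀ b ∈ s, a ≠ b → ¬ (Sgraph n d).Adj a b := by
  rw [← s.card_map (Function.Embedding.subtype _), card_R1_eq_iff]
  simp only [Finset.forall_mem_map, Function.Embedding.subtype_apply]
  refine forall₂_congr fun a _ => forall₂_congr fun b _ => ?_
  have hsum : ∑ i, a.1 i = ∑ i, b.1 i := a.2.trans b.2.symm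
  by_cases hab : a = b
  · simp [hab]
  · have hab' : a.1 ≠ b.1 := Subtype.coe_ne_coe.2 hab
    have hadj : (Sgraph n d).Adj a b ↔ ∃ i j, a.1 + Pi.single i 1 = b.1 + Pi.single j 1 := by
      rw [exists_add_single_eq_add_single_iff hab' hsum, a.2]
      simp [Sgraph, hab]
    simp [hab, hab', hadj]

theorem spread_eq_indepNum_general (n d : ℕ) :
    spread n d = indepNum (Sgraph n d) := by
  unfold spread indepNum
  congr 1
  ext k
  constructor
  · rintro ⟨W, hW, hcard, rfl⟩
    obtain ⟨s, rfl⟩ : ∃ s : Finset {a : Fin n → ℕ // ∑ i, a i = d},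
        s.map (Function.Embedding.subtype _) = W :=
      ⟨_, Finset.subtype_map_of_mem fun a ha => Finset.Nat.mem_antidiagonalTuple.1 (hW ha)⟩
    rw [Finset.card_map] at hcard ⊢
    exact ⟨s, (card_R1_map_subtype_eq_iff s).1 hcard, rfl⟩
  · rintro ⟨s, hs, rfl⟩
    refine ⟨s.map (Function.Embedding.subtype _), ?_, ?_, Finset.card_map _⟩
    · intro a ha
      obtain ⟨x, -, rfl⟩ := Finset.mem_map.1 ha
      exact Finset.Nat.mem_antidiagonalTuple.2 x.2
    · rw [Finset.card_map]
      exact (card_R1_map_subtype_eq_iff s).2 hs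

/-- For all positive `n` and `d`, the spreading number `α_n(d)` equals the
independence number of the graph `S_n(d)`. -/
theorem spread_eq_indepNum (n d : ℕ) (hn : 0 < n) (hd : 0 < d) :
    spread n d = indepNum (Sgraph n d) :=
  spread_eq_indepNum_general n d
end

section
/- For all integers n ≥ 2 and d ≥ 2, the following chain of inequalities holds: v_n(d)/n ≤ α_n(d) ≤ ρ_n(d) ≤ v_n(d)/n + ((n−1)/n)·v_{n−1}(d), where v_n(d) = C(n+d−1, d), with the inequalities read in ℚ. -/
/-- The covering number `ρ_n(e) = min{ |W| : W ⊆ M_{e-1} and R₁W = M_e }`. -/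
noncomputable def rho (n e : ℕ) : ℕ :=
  sInf {k | ∃ W : Finset (Fin n → ℕ),
    W ⊆ Mset n (e - 1) ∧ R1 n W = Mset n e ∧ W.card = k}

/-!
Write `W_r ⊆ M_d` for the monomials `a` of weight `∑ j · a_j ≡ r (mod n)`. Since `a + e_i` has
weight `r + i`, the shifts of `W_r` are pairwise distinct, so each `W_r` is spreading; the `n`
classes partition `M_d`, and the largest has at least `v_n(d)/n` elements.

A monomial of a spreading set `W` is reached from a cover `C` along some `c + e_i`, and no
`c ∈ C` can serve two monomials `w ≠ w'` of `W` (else `w + e_{i'} = w' + e_i`), so `|W| ≤ |C|`.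

Completing `W_r ⊆ M_{d-1}` by one predecessor of each monomial of `M_d \ R₁W_r` gives a cover
of size `|W_r| + v_n(d) - n|W_r|`; the smallest of these `n` covers has size at most
`v_n(d-1)/n + v_n(d) - v_n(d-1)`, which is the stated bound by Pascal's rule.
-/

section Pigeonhole

variable {ι : Type*} [Fintype ι] [Nonempty ι]

lemma exists_card_mul_le_sum (f : ι → ℕ) : ∃ i, Fintype.card ι * f i ≤ ∑ j, f j := by
  obtain ⟨i, -, hi⟩ := Finset.exists_le_of_sum_le (f := fun i => Fintype.card ι * f i)
    (g := fun _ => ∑ j, f j) Finset.univ_nonempty (by simp [Finset.mul_sum])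
  exact ⟨i, hi⟩

lemma exists_sum_le_card_mul (f : ι → ℕ) : ∃ i, ∑ j, f j ≤ Fintype.card ι * f i := by
  obtain ⟨i, -, hi⟩ := Finset.exists_le_of_sum_le (f := fun _ => ∑ j, f j)
    (g := fun i => Fintype.card ι * f i) Finset.univ_nonempty (by simp [Finset.mul_sum])
  exact ⟨i, hi⟩

end Pigeonhole

section Monomials

variable {n d : ℕ}

lemma mem_Mset {a : Fin n → ℕ} : a ∈ Mset n d ↔ ∑ i, a i = d :=
  Finset.Nat.mem_antidiagonalTuple

lemma card_Mset (n d : ℕ) : (Mset n d).card = (n + d - 1).choose d := by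
  have e : {a // a ∈ Mset n d} ≃ Sym (Fin n) d :=
    (Equiv.subtypeEquivRight fun _ => mem_Mset).trans (Sym.equivNatSumOfFintype (Fin n) d).symm
  rw [← Fintype.card_coe, Fintype.card_congr e, Sym.card_sym_eq_choose, Fintype.card_fin]

lemma card_Mset_succ (hn : 1 ≤ n) (d : ℕ) :
    (Mset n (d + 1)).card = (Mset n d).card + (n - 1 + (d + 1) - 1).choose (d + 1) := by
  rw [card_Mset, card_Mset, show n + (d + 1) - 1 = (n + d - 1) + 1 by omega,
    show n - 1 + (d + 1) - 1 = n + d - 1 by omega, Nat.choose_succ_succ]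

lemma add_single_mem_Mset {a : Fin n → ℕ} (ha : a ∈ Mset n d) (i : Fin n) :
    a + Pi.single i 1 ∈ Mset n (d + 1) := by
  rw [mem_Mset] at ha ⊢
  simp [Finset.sum_add_distrib, ha]

lemma sub_single_add_single {b : Fin n → ℕ} {i : Fin n} (hi : 0 < b i) :
    b - Pi.single i 1 + Pi.single i 1 = b := by
  funext j
  by_cases h : j = i
  · subst h; simp; omega
  · simp [Pi.single_eq_of_ne h]

lemma exists_add_single_eq {b : Fin n → ℕ} (hb : b ∈ Mset n (d + 1)) :
    ∃ a ∈ Mset n d, ∃ i, a + Pi.single i 1 = b := by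
  obtain ⟨i, hi⟩ : ∃ i, 0 < b i := by
    by_contra! h
    have : ∑ i, b i = 0 := Finset.sum_eq_zero fun i _ => Nat.le_zero.mp (h i)
    rw [mem_Mset] at hb
    omega
  refine ⟨b - Pi.single i 1, ?_, i, sub_single_add_single hi⟩
  have hsum : ∑ j, (b - Pi.single i 1 : Fin n → ℕ) j + 1 = ∑ j, b j := by
    conv_rhs => rw [← sub_single_add_single hi]
    simp [Finset.sum_add_distrib]
  rw [mem_Mset] at hb ⊢
  omega

end Monomials

section Shadow

variable {n d : ℕ} {W C : Finset (Fin n → ℕ)}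

lemma mem_R1 {x : Fin n → ℕ} : x ∈ R1 n W ↔ ∃ a ∈ W, ∃ i, a + Pi.single i 1 = x := by
  simp [R1, and_comm]

lemma R1_mono (h : W ⊆ C) : R1 n W ⊆ R1 n C :=
  Finset.image_subset_image (Finset.product_subset_product_left h)

lemma R1_subset_Mset (hW : W ⊆ Mset n d) : R1 n W ⊆ Mset n (d + 1) := by
  intro x hx
  obtain ⟨a, ha, i, rfl⟩ := mem_R1.mp hx
  exact add_single_mem_Mset (hW ha) i

lemma R1_Mset : R1 n (Mset n d) = Mset n (d + 1) := by
  refine (R1_subset_Mset subset_rfl).antisymm fun b hb => ?_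
  obtain ⟨a, ha, i, rfl⟩ := exists_add_single_eq hb
  exact mem_R1.mpr ⟨a, ha, i, rfl⟩

lemma card_R1_eq_mul_iff_injOn :
    (R1 n W).card = n * W.card ↔
      Set.InjOn (fun p : (Fin n → ℕ) × Fin n => p.1 + Pi.single p.2 1) (↑W ×ˢ Set.univ) := by
  rw [show (↑W ×ˢ Set.univ : Set ((Fin n → ℕ) × Fin n)) =
      ↑(W ×ˢ (Finset.univ : Finset (Fin n))) by simp,
    ← Finset.card_image_iff, Finset.card_product, Finset.card_univ, Fintype.card_fin, mul_comm]
  rfl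

lemma card_le_card_of_subset_R1 (hW : (R1 n W).card = n * W.card) (hWC : W ⊆ R1 n C) :
    W.card ≤ C.card := by
  have hinj := card_R1_eq_mul_iff_injOn.mp hW
  have hpred : ∀ w ∈ W, ∃ c ∈ C, ∃ i, c + Pi.single i 1 = w := fun w hw => mem_R1.mp (hWC hw)
  choose! c hc i hi using hpred
  refine Finset.card_le_card_of_injOn c hc fun w hw w' hw' hcw => ?_
  have hshift : w + Pi.single (i w' hw') 1 = w' + Pi.single (i w hw) 1 :=
    calc w + Pi.single (i w' hw') 1
        = c w + Pi.single (i w hw) 1 + Pi.single (i w' hw') 1 := by rw [hi w hw]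
      _ = c w' + Pi.single (i w' hw') 1 + Pi.single (i w hw) 1 := by rw [hcw, add_right_comm]
      _ = w' + Pi.single (i w hw) 1 := by rw [hi w' hw']
  exact congrArg Prod.fst (@hinj (w, _) ⟨hw, trivial⟩ (w', _) ⟨hw', trivial⟩ hshift)

lemma exists_R1_eq_Mset_card_le (hW : W ⊆ Mset n d) :
    ∃ C ⊆ Mset n d, R1 n C = Mset n (d + 1) ∧
      C.card ≤ W.card + (Mset n (d + 1) \ R1 n W).card := by
  have hpred : ∀ b ∈ Mset n (d + 1) \ R1 n W, ∃ a ∈ Mset n d, ∃ i, a + Pi.single i 1 = b :=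
    fun b hb => exists_add_single_eq (Finset.mem_sdiff.mp hb).1
  choose! a ha i hi using hpred
  have hC : W ∪ (Mset n (d + 1) \ R1 n W).image a ⊆ Mset n d :=
    Finset.union_subset hW (Finset.image_subset_iff.mpr ha)
  refine ⟨_, hC, (R1_subset_Mset hC).antisymm fun b hb => ?_,
    (Finset.card_union_le _ _).trans (Nat.add_le_add_left Finset.card_image_le _)⟩
  by_cases hbW : b ∈ R1 n W
  · exact R1_mono Finset.subset_union_left hbW
  · have hb' : b ∈ Mset n (d + 1) \ R1 n W := Finset.mem_sdiff.mpr ⟨hb, hbW⟩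
    exact mem_R1.mpr
      ⟨a b, Finset.mem_union_right _ (Finset.mem_image_of_mem a hb'), i b hb', hi b hb'⟩

end Shadow

section Weight

variable {n d : ℕ}

def weight (n : ℕ) (a : Fin n → ℕ) : ZMod n := ∑ j, (j.val : ZMod n) * a j

lemma weight_add_single (a : Fin n → ℕ) (i : Fin n) :
    weight n (a + Pi.single i 1) = weight n a + i.val := by
  simp [weight, mul_add, Finset.sum_add_distrib, Pi.single_apply]

lemma Fin.natCast_val_injective [NeZero n] :
    Function.Injective fun i : Fin n => (i.val : ZMod n) := by
  intro i j h
  have := congrArg ZMod.val h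
  rw [ZMod.val_natCast_of_lt i.isLt, ZMod.val_natCast_of_lt j.isLt] at this
  exact Fin.ext this

def weightClass (n d : ℕ) (r : ZMod n) : Finset (Fin n → ℕ) :=
  (Mset n d).filter fun a => weight n a = r

lemma weightClass_subset (r : ZMod n) : weightClass n d r ⊆ Mset n d :=
  Finset.filter_subset _ _

lemma sum_card_weightClass [NeZero n] : ∑ r, (weightClass n d r).card = (Mset n d).card :=
  (Finset.card_eq_sum_card_fiberwise fun a _ => Finset.mem_univ (weight n a)).symm

lemma card_R1_weightClass [NeZero n] (r : ZMod n) :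
    (R1 n (weightClass n d r)).card = n * (weightClass n d r).card := by
  refine card_R1_eq_mul_iff_injOn.mpr fun ⟨a, i⟩ ha ⟨b, j⟩ hb hab => ?_
  simp only [weightClass, Set.mem_prod, Finset.mem_coe, Finset.mem_filter] at ha hb hab
  have hij : i = j := Fin.natCast_val_injective <| add_left_cancel <| by
    simpa only [weight_add_single, ha.1.2, hb.1.2] using congrArg (weight n) hab
  subst hij
  rw [add_right_cancel hab]

end Weight

section Bounds

variable {n d : ℕ}

lemma spread_bddAbove : BddAbove {k | ∃ W : Finset (Fin n → ℕ),
    W ⊆ Mset n d ∧ (R1 n W).card = n * W.card ∧ W.card = k} :=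
  ⟨(Mset n d).card, by rintro k ⟨W, hW, -, rfl⟩; exact Finset.card_le_card hW⟩

lemma card_Mset_le_mul_spread [NeZero n] : (Mset n d).card ≤ n * spread n d := by
  obtain ⟨r, hr⟩ := exists_sum_le_card_mul fun r => (weightClass n d r).card
  rw [sum_card_weightClass, ZMod.card] at hr
  exact hr.trans <| Nat.mul_le_mul_left n <|
    le_csSup spread_bddAbove ⟨_, weightClass_subset r, card_R1_weightClass r, rfl⟩

lemma spread_le_rho : spread n (d + 1) ≤ rho n (d + 1) := by
  refine csSup_le ⟨0, ∅, Finset.empty_subset _, by simp [R1], rfl⟩ ?_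
  rintro k ⟨W, hW, hWs, rfl⟩
  refine le_csInf ⟨_, Mset n d, subset_rfl, R1_Mset, rfl⟩ ?_
  rintro k ⟨C, -, hC, rfl⟩
  exact card_le_card_of_subset_R1 hWs (hC ▸ hW)

lemma mul_rho_add_le [NeZero n] :
    n * rho n (d + 1) + n * (Mset n d).card ≤ (Mset n d).card + n * (Mset n (d + 1)).card := by
  set u : ZMod n → ℕ := fun r => (Mset n (d + 1) \ R1 n (weightClass n d r)).card
  have hu : ∀ r, u r + n * (weightClass n d r).card = (Mset n (d + 1)).card := fun r => by
    rw [← card_R1_weightClass]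
    exact Finset.card_sdiff_add_card_eq_card (R1_subset_Mset (weightClass_subset r))
  have hsum : ∑ r, u r + n * (Mset n d).card = n * (Mset n (d + 1)).card := by
    simp only [← sum_card_weightClass, Finset.mul_sum, ← Finset.sum_add_distrib, hu,
      Finset.sum_const, Finset.card_univ, ZMod.card, smul_eq_mul]
  obtain ⟨r, hr⟩ := exists_card_mul_le_sum fun r => (weightClass n d r).card + u r
  rw [ZMod.card, Finset.sum_add_distrib, sum_card_weightClass] at hr
  obtain ⟨C, hCM, hC, hCcard⟩ := exists_R1_eq_Mset_card_le (weightClass_subset (d := d) r)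
  have hrho : rho n (d + 1) ≤ C.card := Nat.sInf_le ⟨C, hCM, hC, rfl⟩
  have : n * rho n (d + 1) ≤ n * ((weightClass n d r).card + u r) :=
    Nat.mul_le_mul_left n (hrho.trans hCcard)
  omega

end Bounds

/-- Geramita–Gregory–Roberts bounds: for `n ≥ 2` and `d ≥ 2`,
`v_n(d)/n ≤ α_n(d) ≤ ρ_n(d) ≤ v_n(d)/n + ((n-1)/n)·v_{n-1}(d)` in `ℚ`,
where `v_n(d) = C(n+d-1, d)`. -/
theorem ggr_bounds (n d : ℕ) (hn : 2 ≤ n) (hd : 2 ≤ d) :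
    (Nat.choose (n + d - 1) d : ℚ) / n ≤ (spread n d : ℚ) ∧
    (spread n d : ℚ) ≤ (rho n d : ℚ) ∧
    (rho n d : ℚ) ≤ (Nat.choose (n + d - 1) d : ℚ) / n +
      ((n : ℚ) - 1) / n * (Nat.choose (n - 1 + d - 1) d : ℚ) := by
  have : NeZero n := ⟨by omega⟩
  obtain ⟨d, rfl⟩ : ∃ d', d = d' + 1 := ⟨d - 1, by omega⟩
  have hnQ : (0 : ℚ) < n := by exact_mod_cast (show 0 < n by omega)
  have hlower : ((Mset n (d + 1)).card : ℚ) ≤ n * spread n (d + 1) := by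
    exact_mod_cast card_Mset_le_mul_spread
  have hupper : (n * rho n (d + 1) + n * (Mset n d).card : ℚ) ≤
      (Mset n d).card + n * (Mset n (d + 1)).card := by
    exact_mod_cast mul_rho_add_le
  have hpascal : ((Mset n (d + 1)).card : ℚ) =
      (Mset n d).card + (n - 1 + (d + 1) - 1).choose (d + 1) := by
    exact_mod_cast card_Mset_succ (by omega) d
  rw [← card_Mset]
  refine ⟨by rwa [div_le_iff₀ hnQ, mul_comm], by exact_mod_cast spread_le_rho, ?_⟩
  rw [div_add' _ _ _ hnQ.ne', le_div_iff₀ hnQ, mul_right_comm, div_mul_cancel₀ _ hnQ.ne']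
  linear_combination hupper + ((n : ℚ) - 1) * hpascal
end
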